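/- arXiv:2211.01962 — 6 statements merged into one kernel-verified Lean document; each statement's English description precedes it below -/
import Mathlib

section
/- For any sequence of positive reals $x_1,\dots,x_n$, we have $\left(\sum_{i=1}^n x_i\right) / \sqrt{\sum_{i=1}^n i\, x_i^2} \le \sqrt{1+\log n}$. -/
/-! Cauchy–Schwarz with weights `i` gives `(∑ xᵢ)² ≤ (∑ 1/i) · ∑ i xᵢ²`, and the harmonic
number `∑_{i ≤ n} 1/i` is at most `1 + log n`. -/

open Finset

theorem Finset.sq_sum_le_sum_inv_mul_sum_mul_sq {ι R : Type*} [Field R] [LinearOrder R]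
    [IsStrictOrderedRing R] (s : Finset ι) (x : ι → R) {w : ι → R} (hw : ∀ i ∈ s, 0 < w i) :
    (∑ i ∈ s, x i) ^ 2 ≤ (∑ i ∈ s, (w i)⁻¹) * ∑ i ∈ s, w i * x i ^ 2 := by
  refine sum_sq_le_sum_mul_sum_of_sq_le_mul s (fun i hi => (inv_pos.2 (hw i hi)).le)
    (fun i hi => mul_nonneg (hw i hi).le (sq_nonneg _)) fun i hi => ?_
  rw [inv_mul_cancel_left₀ (hw i hi).ne']

theorem sum_Icc_inv_le_one_add_log (n : ℕ) :
    ∑ i ∈ Icc 1 n, (i : ℝ)⁻¹ ≤ 1 + Real.log n := by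
  simpa [harmonic_eq_sum_Icc] using harmonic_le_one_add_log n

theorem div_sqrt_le_sqrt_of_sq_le_mul {a S L : ℝ} (hS : 0 ≤ S) (h : a ^ 2 ≤ L * S) :
    a / √S ≤ √L := by
  obtain rfl | hS := hS.eq_or_lt
  · simp
  calc a / √S ≤ |a| / √S := div_le_div_of_nonneg_right (le_abs_self a) (Real.sqrt_nonneg S)
    _ = √(a ^ 2 / S) := by rw [Real.sqrt_div' _ hS.le, Real.sqrt_sq_eq_abs]
    _ ≤ √L := Real.sqrt_le_sqrt ((div_le_iff₀ hS).2 h)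

theorem stmt_0_general (n : ℕ) (x : ℕ → ℝ) :
    (∑ i ∈ Finset.Icc 1 n, x i) /
        Real.sqrt (∑ i ∈ Finset.Icc 1 n, (i : ℝ) * (x i) ^ 2)
      ≤ Real.sqrt (1 + Real.log n) := by
  have hweights : ∀ i ∈ Icc 1 n, (0 : ℝ) < i := fun i hi => by
    exact_mod_cast (mem_Icc.1 hi).1
  have hS : 0 ≤ ∑ i ∈ Icc 1 n, (i : ℝ) * x i ^ 2 :=
    sum_nonneg fun i hi => mul_nonneg (hweights i hi).le (sq_nonneg _)
  refine div_sqrt_le_sqrt_of_sq_le_mul hS ?_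
  calc (∑ i ∈ Icc 1 n, x i) ^ 2
      ≤ (∑ i ∈ Icc 1 n, (i : ℝ)⁻¹) * ∑ i ∈ Icc 1 n, (i : ℝ) * x i ^ 2 :=
        sq_sum_le_sum_inv_mul_sum_mul_sq _ x hweights
    _ ≤ (1 + Real.log n) * ∑ i ∈ Icc 1 n, (i : ℝ) * x i ^ 2 :=
        mul_le_mul_of_nonneg_right (sum_Icc_inv_le_one_add_log n) hS

theorem stmt_0 (n : ℕ) (hn : 1 ≤ n) (x : ℕ → ℝ)
    (hx : ∀ i ∈ Finset.Icc 1 n, 0 < x i) :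
    (∑ i ∈ Finset.Icc 1 n, x i) /
        Real.sqrt (∑ i ∈ Finset.Icc 1 n, (i : ℝ) * (x i) ^ 2)
      ≤ Real.sqrt (1 + Real.log n) :=
  stmt_0_general n x
end

section
/- For a joint distribution on a pair $(X,Y)$: $\mathbb{E}_{X \sim P_X}[D_H^2(P_{Y|X}, Q_{Y|X})] \le 4 D_H^2(P_{X,Y}, Q_{X,Y})$, where $D_H^2$ denotes squared Hellinger divergence and $P_{Y|X}$, $Q_{Y|X}$ are the conditional distributions of $Y$ given $X$ under $P$ and $Q$. -/
/-!
Write `A = ∫ a`, `B = ∫ b` and `S = ∫ √a √b` for the fibres `a = p(x, ·)`, `b = q(x, ·)`. Expanding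
the squares, the fibre term is `A · (1 - s)` with `s = S / √(A B) ∈ [0, 1]`, while
`∫ (√a - √b)² = A + B - 2 s √A √B`, and `A (1 - s) ≤ 2 (A + B - 2 s √A √B)` is elementary.
So each fibre term is at most twice the unnormalised squared Hellinger distance of the fibres,
and Fubini adds these up to the joint distance.
-/

open MeasureTheory

lemma Real.sq_sqrt_sub_sqrt {x y : ℝ} (hx : 0 ≤ x) (hy : 0 ≤ y) :
    (√x - √y) ^ 2 = x + y - 2 * (√x * √y) := by
  nlinarith [Real.sq_sqrt hx, Real.sq_sqrt hy]

lemma sq_mul_one_sub_le {u v s : ℝ} (hs0 : 0 ≤ s) (hs1 : s ≤ 1) :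
    u ^ 2 * (1 - s) ≤ 2 * (u ^ 2 + v ^ 2 - 2 * (s * (u * v))) := by
  nlinarith [sq_nonneg (v - s * u),
    mul_nonneg (mul_nonneg (sq_nonneg u) (sub_nonneg.2 hs1)) (by linarith : 0 ≤ 1 + 2 * s)]

section Hellinger

variable {α : Type*} [MeasurableSpace α] {m : Measure α} {a b : α → ℝ}

lemma integrable_sqrt_mul_sqrt (ha0 : ∀ y, 0 ≤ a y) (hb0 : ∀ y, 0 ≤ b y)
    (hai : Integrable a m) (hbi : Integrable b m) :
    Integrable (fun y => √(a y) * √(b y)) m := by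
  refine ((hai.add hbi).div_const 2).mono
    ((Real.continuous_sqrt.comp_aestronglyMeasurable hai.1).mul
      (Real.continuous_sqrt.comp_aestronglyMeasurable hbi.1)) (.of_forall fun y => ?_)
  rw [Pi.add_apply, Real.norm_of_nonneg (by positivity),
    Real.norm_of_nonneg (div_nonneg (add_nonneg (ha0 y) (hb0 y)) zero_le_two)]
  nlinarith [Real.sq_sqrt_sub_sqrt (ha0 y) (hb0 y), sq_nonneg (√(a y) - √(b y))]

lemma integrable_sq_sqrt_sub_sqrt (ha0 : ∀ y, 0 ≤ a y) (hb0 : ∀ y, 0 ≤ b y)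
    (hai : Integrable a m) (hbi : Integrable b m) :
    Integrable (fun y => (√(a y) - √(b y)) ^ 2) m := by
  refine ((hai.add hbi).sub ((integrable_sqrt_mul_sqrt ha0 hb0 hai hbi).const_mul 2)).congr
    (.of_forall fun y => (Real.sq_sqrt_sub_sqrt (ha0 y) (hb0 y)).symm)

lemma integral_sq_sqrt_sub_sqrt (ha0 : ∀ y, 0 ≤ a y) (hb0 : ∀ y, 0 ≤ b y)
    (hai : Integrable a m) (hbi : Integrable b m) :
    ∫ y, (√(a y) - √(b y)) ^ 2 ∂m
      = ∫ y, a y ∂m + ∫ y, b y ∂m - 2 * ∫ y, √(a y) * √(b y) ∂m := by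
  rw [integral_congr_ae (.of_forall fun y => Real.sq_sqrt_sub_sqrt (ha0 y) (hb0 y)),
    integral_sub (f := fun y => a y + b y) (hai.add hbi)
      ((integrable_sqrt_mul_sqrt ha0 hb0 hai hbi).const_mul 2),
    integral_add hai hbi, integral_const_mul]

lemma integral_sq_sqrt_div_sub_sqrt_div (ha0 : ∀ y, 0 ≤ a y) (hb0 : ∀ y, 0 ≤ b y)
    (hai : Integrable a m) (hbi : Integrable b m) (hA : 0 < ∫ y, a y ∂m) (hB : 0 < ∫ y, b y ∂m) :
    ∫ y, (√(a y / ∫ y', a y' ∂m) - √(b y / ∫ y', b y' ∂m)) ^ 2 ∂m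
      = 2 - 2 * ((∫ y, √(a y) * √(b y) ∂m) / (√(∫ y, a y ∂m) * √(∫ y, b y ∂m))) := by
  set A := ∫ y, a y ∂m
  set B := ∫ y, b y ∂m
  have hmul : ∀ y, √(a y / A) * √(b y / B) = √(a y) * √(b y) / (√A * √B) := fun y => by
    rw [Real.sqrt_div' _ hA.le, Real.sqrt_div' _ hB.le, div_mul_div_comm]
  rw [integral_sq_sqrt_sub_sqrt (fun y => div_nonneg (ha0 y) hA.le)
    (fun y => div_nonneg (hb0 y) hB.le) (hai.div_const A) (hbi.div_const B)]
  simp_rw [hmul]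
  rw [integral_div, integral_div, integral_div, div_self hA.ne', div_self hB.ne']
  ring

lemma integral_mul_half_integral_sq_sqrt_div_sub_le (ha0 : ∀ y, 0 ≤ a y) (hb0 : ∀ y, 0 ≤ b y)
    (hai : Integrable a m) (hbi : Integrable b m) :
    (∫ y, a y ∂m) * ((1 / 2) * ∫ y, (√(a y / ∫ y', a y' ∂m) - √(b y / ∫ y', b y' ∂m)) ^ 2 ∂m)
      ≤ 2 * ∫ y, (√(a y) - √(b y)) ^ 2 ∂m := by
  rcases (integral_nonneg ha0 : 0 ≤ ∫ y, a y ∂m).eq_or_lt with hA | hA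
  · rw [← hA, zero_mul]
    positivity
  rcases (integral_nonneg hb0 : 0 ≤ ∫ y, b y ∂m).eq_or_lt with hB | hB
  · -- `b / ∫ b` is junk `0` here, and `b = 0` almost everywhere
    have hb : b =ᵐ[m] 0 := (integral_eq_zero_iff_of_nonneg hb0 hbi).mp hB.symm
    have hnorm : ∫ y, (√(a y / ∫ y', a y' ∂m) - √(b y / ∫ y', b y' ∂m)) ^ 2 ∂m = 1 := by
      simp_rw [← hB, div_zero, Real.sqrt_zero, sub_zero, Real.sq_sqrt (div_nonneg (ha0 _) hA.le)]
      rw [integral_div, div_self hA.ne']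
    have hfibre : ∫ y, (√(a y) - √(b y)) ^ 2 ∂m = ∫ y, a y ∂m :=
      integral_congr_ae (hb.mono fun y hy => by simp [hy, Real.sq_sqrt (ha0 y)])
    rw [hnorm, hfibre]
    linarith
  have hnorm := integral_sq_sqrt_div_sub_sqrt_div ha0 hb0 hai hbi hA hB
  rw [hnorm, integral_sq_sqrt_sub_sqrt ha0 hb0 hai hbi]
  set s := (∫ y, √(a y) * √(b y) ∂m) / (√(∫ y, a y ∂m) * √(∫ y, b y ∂m))
  have hs0 : 0 ≤ s := div_nonneg (integral_nonneg fun _ => by positivity) (by positivity)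
  -- Cauchy–Schwarz for the Bhattacharyya coefficient `s`, read off from `hnorm`
  have hs1 : s ≤ 1 := by linarith [hnorm ▸ integral_nonneg fun _ => sq_nonneg _]
  have key := sq_mul_one_sub_le (u := √(∫ y, a y ∂m)) (v := √(∫ y, b y ∂m)) hs0 hs1
  rw [Real.sq_sqrt hA.le, Real.sq_sqrt hB.le] at key
  have hS : ∫ y, √(a y) * √(b y) ∂m = s * (√(∫ y, a y ∂m) * √(∫ y, b y ∂m)) :=
    (div_mul_cancel₀ _ (by positivity)).symm
  rw [hS]
  linarith

end Hellinger

theorem stmt_2_general {X Y : Type*} [MeasurableSpace X] [MeasurableSpace Y]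
    (μ : Measure X) (ν : Measure Y) [SigmaFinite μ] [SigmaFinite ν]
    (p q : X × Y → ℝ) (hp0 : ∀ z, 0 ≤ p z) (hq0 : ∀ z, 0 ≤ q z)
    (hpi : Integrable p (μ.prod ν)) (hqi : Integrable q (μ.prod ν)) :
    ∫ x, (∫ y, p (x, y) ∂ν) *
        ((1 / 2) * ∫ y, (Real.sqrt (p (x, y) / ∫ y', p (x, y') ∂ν)
            - Real.sqrt (q (x, y) / ∫ y', q (x, y') ∂ν)) ^ 2 ∂ν) ∂μ
      ≤ 4 * ((1 / 2) * ∫ z, (Real.sqrt (p z) - Real.sqrt (q z)) ^ 2 ∂(μ.prod ν)) := by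
  have hsq := integrable_sq_sqrt_sub_sqrt hp0 hq0 hpi hqi
  calc _ ≤ ∫ x, 2 * ∫ y, (√(p (x, y)) - √(q (x, y))) ^ 2 ∂ν ∂μ := by
        refine integral_mono_of_nonneg (.of_forall fun x =>
          mul_nonneg (integral_nonneg fun _ => hp0 _) (by positivity))
          (hsq.integral_prod_left.const_mul 2) ?_
        filter_upwards [hpi.prod_right_ae, hqi.prod_right_ae] with x hpx hqx
        exact integral_mul_half_integral_sq_sqrt_div_sub_le (fun _ => hp0 _) (fun _ => hq0 _)
          hpx hqx
    _ = 4 * ((1 / 2) * ∫ z, (√(p z) - √(q z)) ^ 2 ∂(μ.prod ν)) := by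
        rw [integral_const_mul, integral_prod _ hsq]
        ring

theorem stmt_2 {X Y : Type*} [MeasurableSpace X] [MeasurableSpace Y]
    (μ : Measure X) (ν : Measure Y) [SigmaFinite μ] [SigmaFinite ν]
    (p q : X × Y → ℝ) (hp0 : ∀ z, 0 ≤ p z) (hq0 : ∀ z, 0 ≤ q z)
    (hpi : Integrable p (μ.prod ν)) (hqi : Integrable q (μ.prod ν))
    (hp1 : ∫ z, p z ∂(μ.prod ν) = 1) (hq1 : ∫ z, q z ∂(μ.prod ν) = 1) :
    ∫ x, (∫ y, p (x, y) ∂ν) *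
        ((1 / 2) * ∫ y, (Real.sqrt (p (x, y) / ∫ y', p (x, y') ∂ν)
            - Real.sqrt (q (x, y) / ∫ y', q (x, y') ∂ν)) ^ 2 ∂ν) ∂μ
      ≤ 4 * ((1 / 2) * ∫ z, (Real.sqrt (p z) - Real.sqrt (q z)) ^ 2 ∂(μ.prod ν)) :=
  stmt_2_general μ ν p q hp0 hq0 hpi hqi
end

section
/- (Elliptical potential lemma) Let $x_1,\dots,x_T \in \mathbb{R}^d$, let $\Lambda_0$ be a positive-definite $d\times d$ matrix, and define $\Lambda_t = \Lambda_0 + \sum_{i=1}^{t-1} x_i x_i^\top$. Then $\sum_{i=1}^T \min\{1, \|x_i\|^2_{\Lambda_i^{-1}}\} \le 2 \log\left(\det(\Lambda_{T+1}) / \det(\Lambda_1)\right)$. -/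
/-!
Each rank-one update multiplies the determinant by `1 + uᵢ` with `uᵢ = ‖xᵢ‖²_{Λᵢ⁻¹} ≥ 0`
(matrix determinant lemma), so `log (det Λ_{T+1} / det Λ₁)` telescopes to `∑ log (1 + uᵢ)`.
Termwise, `min 1 u ≤ 2 log (1 + u)` for `u ≥ 0`.
-/

open Matrix Finset

theorem min_one_le_two_mul_log_one_add {u : ℝ} (hu : 0 ≤ u) :
    min 1 u ≤ 2 * Real.log (1 + u) := by
  rcases le_total 1 u with h | h
  · rw [min_eq_left h]
    have hlog2 : Real.log 2 ≤ Real.log (1 + u) := Real.log_le_log (by norm_num) (by linarith)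
    linarith [Real.log_two_gt_d9]
  · rw [min_eq_right h]
    have hpos : (0 : ℝ) < 1 + u := by linarith
    have hlog : 1 - (1 + u)⁻¹ ≤ Real.log (1 + u) := Real.one_sub_inv_le_log_of_pos hpos
    have hu2 : u ≤ 2 * (1 - (1 + u)⁻¹) := by
      rw [mul_sub, mul_one, le_sub_comm, ← div_eq_mul_inv, div_le_iff₀ hpos]
      nlinarith
    linarith

namespace Matrix

variable {n : Type*} [Fintype n]

theorem PosDef.add_vecMulVec_self {A : Matrix n n ℝ} (hA : A.PosDef) (x : n → ℝ) :
    (A + vecMulVec x x).PosDef := by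
  simpa using hA.add_posSemidef (posSemidef_vecMulVec_self_star x)

variable [DecidableEq n]

theorem det_add_vecMulVec {R : Type*} [CommRing R] {A : Matrix n n R} (hA : IsUnit A.det)
    (u v : n → R) : (A + vecMulVec u v).det = A.det * (1 + v ⬝ᵥ (A⁻¹ *ᵥ u)) := by
  rw [vecMulVec_eq Unit, det_add_replicateCol_mul_replicateRow hA, Matrix.mul_assoc,
    ← replicateCol_mulVec]
  simp [det_unique]

namespace PosDef

variable {A : Matrix n n ℝ}

theorem dotProduct_inv_mulVec_nonneg (hA : A.PosDef) (x : n → ℝ) : 0 ≤ x ⬝ᵥ (A⁻¹ *ᵥ x) := by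
  simpa using hA.inv.posSemidef.dotProduct_mulVec_nonneg x

theorem log_det_add_vecMulVec_self (hA : A.PosDef) (x : n → ℝ) :
    Real.log (A + vecMulVec x x).det = Real.log A.det + Real.log (1 + x ⬝ᵥ (A⁻¹ *ᵥ x)) := by
  have hu := hA.dotProduct_inv_mulVec_nonneg x
  rw [det_add_vecMulVec hA.det_pos.ne'.isUnit, Real.log_mul hA.det_pos.ne' (by positivity)]

end PosDef

end Matrix

theorem sum_min_one_le_two_mul_log_det_div {n : Type*} [Fintype n] [DecidableEq n]
    {A : ℕ → Matrix n n ℝ} {x : ℕ → n → ℝ} {m N : ℕ} (hmN : m ≤ N) (hA : (A m).PosDef)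
    (hstep : ∀ i ∈ Ico m N, A (i + 1) = A i + vecMulVec (x i) (x i)) :
    ∑ i ∈ Ico m N, min 1 (x i ⬝ᵥ ((A i)⁻¹ *ᵥ x i))
      ≤ 2 * Real.log ((A N).det / (A m).det) := by
  have hpos : ∀ i, m ≤ i → i ≤ N → (A i).PosDef := by
    intro i hmi
    induction i, hmi using Nat.le_induction with
    | base => exact fun _ => hA
    | succ i hmi ih =>
      intro hiN
      rw [hstep i (mem_Ico.2 ⟨hmi, hiN⟩)]
      exact (ih (Nat.le_of_succ_le hiN)).add_vecMulVec_self (x i)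
  calc ∑ i ∈ Ico m N, min 1 (x i ⬝ᵥ ((A i)⁻¹ *ᵥ x i))
      ≤ ∑ i ∈ Ico m N, 2 * (Real.log (A (i + 1)).det - Real.log (A i).det) := by
        refine sum_le_sum fun i hi => ?_
        obtain ⟨hmi, hiN⟩ := mem_Ico.1 hi
        have hAi := hpos i hmi hiN.le
        rw [hstep i hi, hAi.log_det_add_vecMulVec_self, add_sub_cancel_left]
        exact min_one_le_two_mul_log_one_add (hAi.dotProduct_inv_mulVec_nonneg (x i))
    _ = 2 * Real.log ((A N).det / (A m).det) := by
        rw [← mul_sum, sum_Ico_sub (fun i => Real.log (A i).det) hmN,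
          Real.log_div (hpos N hmN le_rfl).det_pos.ne' hA.det_pos.ne']

theorem stmt_4 (d T : ℕ) (x : ℕ → Fin d → ℝ) (Λ0 : Matrix (Fin d) (Fin d) ℝ)
    (hΛ0 : Λ0.PosDef) (Λ : ℕ → Matrix (Fin d) (Fin d) ℝ)
    (hΛ : ∀ t, Λ t = Λ0 + ∑ i ∈ Finset.Ico 1 t, Matrix.vecMulVec (x i) (x i)) :
    ∑ i ∈ Finset.Icc 1 T, min 1 (x i ⬝ᵥ ((Λ i)⁻¹ *ᵥ x i))
      ≤ 2 * Real.log ((Λ (T + 1)).det / (Λ 1).det) := by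
  have hΛ1 : (Λ 1).PosDef := by simpa [hΛ] using hΛ0
  have hstep : ∀ i ∈ Ico 1 (T + 1), Λ (i + 1) = Λ i + vecMulVec (x i) (x i) := fun i hi => by
    rw [hΛ, hΛ, sum_Ico_succ_top (mem_Ico.1 hi).1, add_assoc]
  rw [← Ico_add_one_right_eq_Icc]
  exact sum_min_one_le_two_mul_log_det_div (by omega) hΛ1 hstep
end

section
/- Let $Z$ be a bounded random variable with $|Z| \le B$ almost surely, let $\eta > 0$ satisfy $\eta B \le 0.3$, and suppose $\mathbb{E}[Z] \ge 0$ and $\mathbb{E}[Z^2] \le 4 B \cdot \mathbb{E}[Z]$. Then $\log \mathbb{E}[\exp(-\eta Z)] \le -0.25\, \eta\, \mathbb{E}[Z]$. -/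
/-!
On `|x| ≤ 0.3` the exponential lies below the quadratic `1 + x + 0.6 x²`. Taking expectations with
`x = -η Z` bounds `𝔼 exp (-η Z)` by `1 - η 𝔼 Z + 0.6 η² 𝔼 Z²`, and the variance condition
`𝔼 Z² ≤ 4 B 𝔼 Z` together with `η B ≤ 0.3` turns this into `1 - 0.28 η 𝔼 Z`. Finally
`log y ≤ y - 1`.
-/

open MeasureTheory

theorem Real.exp_le_one_add_add_sq_of_abs_le {x : ℝ} (hx : |x| ≤ 0.3) :
    Real.exp x ≤ 1 + x + 0.6 * x ^ 2 := by
  -- third-order Taylor: the remainder `2 |x|³ / 9` is at most `x² / 15` here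
  have h := (abs_sub_le_iff.1 (Real.exp_bound (hx.trans (by norm_num)) three_pos)).1
  norm_num [Finset.sum_range, Fin.sum_univ_three, Nat.factorial] at h
  have hcube : |x| ^ 3 = |x| * x ^ 2 := by rw [← sq_abs x]; ring
  nlinarith [abs_nonneg x, sq_nonneg x]

section

variable {Ω : Type*} [MeasurableSpace Ω] {μ : Measure Ω} {X : Ω → ℝ} {c : ℝ}

lemma integrable_exp_of_ae_abs_le [IsFiniteMeasure μ] (hX : AEStronglyMeasurable X μ)
    (hbd : ∀ᵐ ω ∂μ, |X ω| ≤ c) : Integrable (fun ω ↦ Real.exp (X ω)) μ :=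
  .of_bound (Real.continuous_exp.comp_aestronglyMeasurable hX) (Real.exp c) <|
    hbd.mono fun _ h ↦ by
      rw [Real.norm_eq_abs, Real.abs_exp, Real.exp_le_exp]; exact (le_abs_self _).trans h

lemma integral_exp_le_one_add_integral_add_sq [IsProbabilityMeasure μ]
    (hX : AEStronglyMeasurable X μ) (hbd : ∀ᵐ ω ∂μ, |X ω| ≤ 0.3) :
    ∫ ω, Real.exp (X ω) ∂μ ≤ 1 + ∫ ω, X ω ∂μ + 0.6 * ∫ ω, X ω ^ 2 ∂μ := by
  have hXint : Integrable X μ := .of_bound hX 0.3 hbd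
  have hX2int : Integrable (fun ω ↦ X ω ^ 2) μ :=
    .of_bound (hX.pow 2) (0.3 ^ 2) <| hbd.mono fun _ h ↦ by
      rw [Real.norm_eq_abs, abs_pow]; gcongr
  have hlinint : Integrable (fun ω ↦ 1 + X ω) μ := (integrable_const 1).add hXint
  calc ∫ ω, Real.exp (X ω) ∂μ ≤ ∫ ω, (1 + X ω + 0.6 * X ω ^ 2) ∂μ :=
        integral_mono_ae (integrable_exp_of_ae_abs_le hX hbd) (hlinint.add (hX2int.const_mul _))
          (hbd.mono fun _ ↦ Real.exp_le_one_add_add_sq_of_abs_le)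
    _ = 1 + ∫ ω, X ω ∂μ + 0.6 * ∫ ω, X ω ^ 2 ∂μ := by
        rw [integral_add hlinint (hX2int.const_mul _), integral_add (integrable_const 1) hXint,
          integral_const_mul]
        simp

end

theorem stmt_9_general {Ω : Type*} [MeasurableSpace Ω] (μ : Measure Ω) [IsProbabilityMeasure μ]
    (Z : Ω → ℝ) (hZm : Measurable Z) (B η : ℝ) (hη : 0 < η)
    (hbd : ∀ᵐ ω ∂μ, |Z ω| ≤ B) (hηB : η * B ≤ 0.3)
    (hmean : 0 ≤ ∫ ω, Z ω ∂μ)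
    (hvar : ∫ ω, (Z ω) ^ 2 ∂μ ≤ 4 * B * ∫ ω, Z ω ∂μ) :
    Real.log (∫ ω, Real.exp (-η * Z ω) ∂μ) ≤ -0.25 * η * ∫ ω, Z ω ∂μ := by
  have hX : AEStronglyMeasurable (fun ω ↦ -η * Z ω) μ :=
    (hZm.const_mul _).aestronglyMeasurable
  have hXbd : ∀ᵐ ω ∂μ, |-η * Z ω| ≤ 0.3 := hbd.mono fun ω h ↦ by
    rw [abs_mul, abs_neg, abs_of_pos hη]
    exact (mul_le_mul_of_nonneg_left h hη.le).trans hηB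
  have hquad := integral_exp_le_one_add_integral_add_sq hX hXbd
  simp only [mul_pow, neg_sq, integral_const_mul] at hquad
  have hpos : 0 < ∫ ω, Real.exp (-η * Z ω) ∂μ :=
    integral_exp_pos (integrable_exp_of_ae_abs_le hX hXbd)
  calc Real.log (∫ ω, Real.exp (-η * Z ω) ∂μ) ≤ (∫ ω, Real.exp (-η * Z ω) ∂μ) - 1 :=
        Real.log_le_sub_one_of_pos hpos
    _ ≤ -0.25 * η * ∫ ω, Z ω ∂μ := by
        nlinarith [mul_le_mul_of_nonneg_left hvar (sq_nonneg η),
          mul_nonneg (sub_nonneg.2 hηB) (mul_nonneg hη.le hmean)]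

theorem stmt_9 {Ω : Type*} [MeasurableSpace Ω] (μ : Measure Ω) [IsProbabilityMeasure μ]
    (Z : Ω → ℝ) (hZm : Measurable Z) (B η : ℝ) (hB : 0 ≤ B) (hη : 0 < η)
    (hbd : ∀ᵐ ω ∂μ, |Z ω| ≤ B) (hηB : η * B ≤ 0.3)
    (hmean : 0 ≤ ∫ ω, Z ω ∂μ)
    (hvar : ∫ ω, (Z ω) ^ 2 ∂μ ≤ 4 * B * ∫ ω, Z ω ∂μ) :
    Real.log (∫ ω, Real.exp (-η * Z ω) ∂μ) ≤ -0.25 * η * ∫ ω, Z ω ∂μ :=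
  stmt_9_general μ Z hZm B η hη hbd hηB hmean hvar
end

section
/- (Bucketing bound via distributional eluder dimension, abstracted) Let $(\epsilon^{st})_{1\le s \le t \le T}$ be nonnegative reals, and suppose timesteps with $\epsilon^{tt} > 0$ are assigned to buckets $B^0, B^1, \dots$ by the greedy rule: $t$ joins the smallest-index bucket $i$ such that $\sum_{s \le t-1, s\in B^i} (\epsilon^{st})^2 < (\epsilon^{tt})^2$. Let $b^t$ denote the bucket index of $t$. Then $\sum_{t=1}^T \sum_{s=1}^{t-1} (\epsilon^{st})^2 \ge \sum_{t=1}^T b^t (\epsilon^{tt})^2$. -/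
open Finset

theorem Finset.card_nsmul_le_sum_of_pairwiseDisjoint {ι α M : Type*} [AddCommMonoid M]
    [PartialOrder M] [IsOrderedAddMonoid M] [DecidableEq α] {I : Finset ι} {A : ι → Finset α}
    {S : Finset α} {f : α → M} {c : M} (hdisj : (I : Set ι).PairwiseDisjoint A)
    (hsub : ∀ i ∈ I, A i ⊆ S) (hf : ∀ s ∈ S, 0 ≤ f s) (hc : ∀ i ∈ I, c ≤ ∑ s ∈ A i, f s) :
    #I • c ≤ ∑ s ∈ S, f s :=
  calc #I • c = ∑ _i ∈ I, c := (sum_const c).symm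
    _ ≤ ∑ i ∈ I, ∑ s ∈ A i, f s := sum_le_sum hc
    _ = ∑ s ∈ I.biUnion A, f s := (sum_biUnion hdisj).symm
    _ ≤ ∑ s ∈ S, f s :=
      sum_le_sum_of_subset_of_nonneg (biUnion_subset.2 hsub) fun s hs _ => hf s hs

theorem stmt_17_general (T : ℕ) (ε : ℕ → ℕ → ℝ)
    (B : ℕ → Finset ℕ) (hBdisj : ∀ i j, i ≠ j → Disjoint (B i) (B j))
    (hBsub : ∀ i, B i ⊆ Finset.Icc 1 T)
    (b : ℕ → ℕ)
    (hgreedy : ∀ t ∈ Finset.Icc 1 T, ∀ i < b t,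
      (ε t t) ^ 2 ≤ ∑ s ∈ (B i).filter (· < t), (ε s t) ^ 2) :
    ∑ t ∈ Finset.Icc 1 T, (b t : ℝ) * (ε t t) ^ 2
      ≤ ∑ t ∈ Finset.Icc 1 T, ∑ s ∈ Finset.Icc 1 (t - 1), (ε s t) ^ 2 := by
  refine sum_le_sum fun t ht => ?_
  have hdisj : (range (b t) : Set ℕ).PairwiseDisjoint fun i => (B i).filter (· < t) :=
    fun i _ j _ hij => disjoint_filter_filter (hBdisj i j hij)
  have hsub : ∀ i ∈ range (b t), (B i).filter (· < t) ⊆ Icc 1 (t - 1) := by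
    intro i _ s hs
    obtain ⟨hsB, hst⟩ := mem_filter.1 hs
    exact mem_Icc.2 ⟨(mem_Icc.1 (hBsub i hsB)).1, Nat.le_sub_one_of_lt hst⟩
  simpa using card_nsmul_le_sum_of_pairwiseDisjoint hdisj hsub (fun s _ => sq_nonneg (ε s t))
    fun i hi => hgreedy t ht i (mem_range.1 hi)

theorem stmt_17 (T : ℕ) (ε : ℕ → ℕ → ℝ) (hε : ∀ s t, 0 ≤ ε s t)
    (B : ℕ → Finset ℕ) (hBdisj : ∀ i j, i ≠ j → Disjoint (B i) (B j))
    (hBsub : ∀ i, B i ⊆ Finset.Icc 1 T)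
    (b : ℕ → ℕ)
    (hgreedy : ∀ t ∈ Finset.Icc 1 T, ∀ i < b t,
      (ε t t) ^ 2 ≤ ∑ s ∈ (B i).filter (· < t), (ε s t) ^ 2) :
    ∑ t ∈ Finset.Icc 1 T, (b t : ℝ) * (ε t t) ^ 2
      ≤ ∑ t ∈ Finset.Icc 1 T, ∑ s ∈ Finset.Icc 1 (t - 1), (ε s t) ^ 2 :=
  stmt_17_general T ε B hBdisj hBsub b hgreedy
end

section
/- Let $E \ge 1$ be an integer and let $B^1, \dots, B^{T-1}$ be disjoint finite sets of indices, each of size at most $E$, with nonnegative weights $\epsilon_s$ for $s \in \cup_i B^i$. Then $\sum_{i=1}^{T-1} i \sum_{s\in B^i} \epsilon_s^2 \ge \frac{1}{E(1+\log T)} \left(\sum_{i=1}^{T-1} \sum_{s\in B^i} \epsilon_s\right)^2$. -/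
/-!
Write `x i = ∑ s ∈ B i, ε s`. Cauchy–Schwarz with the weights `1/i` and `i` gives
`(∑ x i)² ≤ H_{T-1} · ∑ i x i²` with `H_{T-1} ≤ 1 + log T`, and Cauchy–Schwarz inside each block
gives `x i² ≤ #(B i) · ∑ ε s² ≤ E · ∑ ε s²`.
-/

open Finset

theorem sq_sum_le_harmonic_mul_sum_mul_sq (n : ℕ) (x : ℕ → ℝ) :
    (∑ i ∈ Icc 1 n, x i) ^ 2 ≤ harmonic n * ∑ i ∈ Icc 1 n, (i : ℝ) * x i ^ 2 := by
  rw [harmonic_eq_sum_Icc, Rat.cast_sum]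
  refine sum_sq_le_sum_mul_sum_of_sq_le_mul _ (fun i _ => by positivity)
    (fun i _ => by positivity) fun i hi => ?_
  have hi : (i : ℝ) ≠ 0 := by exact_mod_cast (Nat.one_le_iff_ne_zero.mp (mem_Icc.mp hi).1)
  rw [Rat.cast_inv, Rat.cast_natCast, inv_mul_cancel_left₀ hi]

theorem harmonic_pred_le_one_add_log (T : ℕ) : (harmonic (T - 1) : ℝ) ≤ 1 + Real.log T := by
  rcases T with _ | _ | k
  · simp
  · simp
  · calc (harmonic (k + 1) : ℝ) ≤ 1 + Real.log (k + 1 : ℕ) := harmonic_le_one_add_log _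
      _ ≤ 1 + Real.log (k + 2 : ℕ) := by gcongr; omega

theorem sq_sum_le_mul_sum_sq_of_card_le {ι : Type*} {s : Finset ι} {E : ℕ} (hs : #s ≤ E)
    (f : ι → ℝ) : (∑ i ∈ s, f i) ^ 2 ≤ E * ∑ i ∈ s, f i ^ 2 :=
  (sq_sum_le_card_mul_sum_sq (s := s) (f := f)).trans (by gcongr)

theorem stmt_18_general (T E : ℕ)
    (B : ℕ → Finset ℕ)
    (hcard : ∀ i, (B i).card ≤ E)
    (ε : ℕ → ℝ) :
    (1 / ((E : ℝ) * (1 + Real.log T))) * (∑ i ∈ Finset.Icc 1 (T - 1), ∑ s ∈ B i, ε s) ^ 2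
      ≤ ∑ i ∈ Finset.Icc 1 (T - 1), (i : ℝ) * ∑ s ∈ B i, (ε s) ^ 2 := by
  have hlog : 0 ≤ Real.log T := Real.log_natCast_nonneg T
  rw [one_div_mul_eq_div]
  -- `div_le_of_le_mul₀` also covers `E = 0`, where the left side is `0` since `x / 0 = 0`.
  refine div_le_of_le_mul₀ (by positivity) (by positivity) ?_
  calc (∑ i ∈ Icc 1 (T - 1), ∑ s ∈ B i, ε s) ^ 2
      ≤ harmonic (T - 1) * ∑ i ∈ Icc 1 (T - 1), (i : ℝ) * (∑ s ∈ B i, ε s) ^ 2 :=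
        sq_sum_le_harmonic_mul_sum_mul_sq _ _
    _ ≤ (1 + Real.log T) * ∑ i ∈ Icc 1 (T - 1), (i : ℝ) * (E * ∑ s ∈ B i, ε s ^ 2) := by
        gcongr with i
        · exact harmonic_pred_le_one_add_log T
        · exact sq_sum_le_mul_sum_sq_of_card_le (hcard i) ε
    _ = (∑ i ∈ Icc 1 (T - 1), (i : ℝ) * ∑ s ∈ B i, ε s ^ 2) * (E * (1 + Real.log T)) := by
        simp_rw [mul_left_comm _ (E : ℝ), ← mul_sum]
        ring

theorem stmt_18 (T E : ℕ) (hE : 1 ≤ E) (hT : 1 ≤ T)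
    (B : ℕ → Finset ℕ) (hdisj : ∀ i j, i ≠ j → Disjoint (B i) (B j))
    (hcard : ∀ i, (B i).card ≤ E)
    (ε : ℕ → ℝ) (hε : ∀ s, 0 ≤ ε s) :
    (1 / ((E : ℝ) * (1 + Real.log T))) * (∑ i ∈ Finset.Icc 1 (T - 1), ∑ s ∈ B i, ε s) ^ 2
      ≤ ∑ i ∈ Finset.Icc 1 (T - 1), (i : ℝ) * ∑ s ∈ B i, (ε s) ^ 2 :=
  stmt_18_general T E B hcard ε
end
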